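/- For every polynomial P ∈ ℂ_p[[x]_q], the Radon-Nikodym derivative of μ_{P,q} recovers P: for all x ∈ ℤ_p, f_{μ_{P,q}}(x) = lim_{n→∞} [p^n]_q μ_{P,q}(x + p^n ℤ_p) = P(x). -/

import Mathlib

open Filter Finset Topology

variable {p : ℕ} [hp : Fact p.Prime] {K : Type*} [NontriviallyNormedField K]

/-- The `q`-analogue `[n]_q = (1 - q^n)/(1 - q)` of a natural number `n`. -/
noncomputable def qNum (q : K) (n : ℕ) : K := (1 - q ^ n) / (1 - q)

/-- `f : ℤ_p → K` is a `C¹` (strictly differentiable) function: the difference quotient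
`Δ₁f(m,x) = (f(x+m) - f(x))/m` extends to a continuous function of `(m, x)`. Here
`ι : ℤ_p →+* K` is the (isometric) embedding of `ℤ_p` into `K`. -/
def IsC1 (ι : PadicInt p →+* K) (f : PadicInt p → K) : Prop :=
  ∃ Df : PadicInt p × PadicInt p → K, Continuous Df ∧
    ∀ m x : PadicInt p, m ≠ 0 → Df (m, x) * ι m = f (x + m) - f x

/-- A `K`-valued distribution on `ℤ_p`: `μ x n` is the value on the ball `x + pⁿℤ_p`;
it depends only on the ball and is finitely additive under splitting a ball of level `n`
into the `p` balls of level `n+1`. -/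
def IsDist (μ : PadicInt p → ℕ → K) : Prop :=
  (∀ (x y : PadicInt p) (n : ℕ), ‖x - y‖ ≤ (p : ℝ) ^ (-(n : ℤ)) → μ x n = μ y n) ∧
  ∀ (x : PadicInt p) (n : ℕ),
    μ x n = ∑ i ∈ range p, μ (x + (i : PadicInt p) * (p : PadicInt p) ^ n) (n + 1)


section AuxLemmas

variable {p : ℕ} [hp : Fact p.Prime] {K : Type*} [NontriviallyNormedField K]

lemma na_sum (hna : IsNonarchimedean (‖·‖ : K → ℝ)) {ι : Type*} (s : Finset ι) (f : ι → K)
    {C : ℝ} (hC : 0 ≤ C) (h : ∀ i ∈ s, ‖f i‖ ≤ C) : ‖∑ i ∈ s, f i‖ ≤ C := by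
  classical
  induction s using Finset.induction with
  | empty => simpa using hC
  | @insert a s hx ih =>
    rw [Finset.sum_insert hx]
    exact le_trans (hna _ _) (max_le (h a (mem_insert_self a s))
      (ih fun i hi => h i (mem_insert_of_mem hi)))

lemma na_add_eq (hna : IsNonarchimedean (‖·‖ : K → ℝ)) {a b : K} (h : ‖b‖ < ‖a‖) :
    ‖a + b‖ = ‖a‖ := by
  refine le_antisymm (le_trans (hna a b) (max_le le_rfl h.le)) ?_
  by_contra hlt
  push_neg at hlt
  have h2 : ‖a‖ ≤ max ‖a + b‖ ‖-b‖ := by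
    have := hna (a + b) (-b); simpa using this
  rw [norm_neg] at h2
  exact absurd h2 (not_le.mpr (max_lt hlt h))

lemma na_natCast (hna : IsNonarchimedean (‖·‖ : K → ℝ)) (n : ℕ) : ‖(n : K)‖ ≤ 1 := by
  induction n with
  | zero => simp
  | succ k ih =>
    push_cast
    exact le_trans (hna _ _) (by simpa using ih)

lemma na_norm_of_one_sub_lt (hna : IsNonarchimedean (‖·‖ : K → ℝ)) {r : K}
    (h : ‖1 - r‖ < 1) : ‖r‖ = 1 := by
  have h1 : r = 1 + -(1 - r) := by ring
  rw [h1, na_add_eq hna (by rwa [norm_neg, norm_one])]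
  simp

lemma one_sub_pow_eq (r : K) (l : ℕ) :
    1 - r ^ l = (∑ i ∈ range l, r ^ i) * (1 - r) := by
  have h1 := geom_sum_mul r l
  have h2 : (∑ i ∈ range l, r ^ i) * (1 - r) = -((∑ i ∈ range l, r ^ i) * (r - 1)) := by ring
  rw [h2, h1]; ring

lemma na_one_sub_pow_le (hna : IsNonarchimedean (‖·‖ : K → ℝ)) {r : K} (hr : ‖r‖ ≤ 1)
    (l : ℕ) : ‖1 - r ^ l‖ ≤ ‖1 - r‖ := by
  rw [one_sub_pow_eq, norm_mul]
  have h1 : ‖∑ i ∈ range l, r ^ i‖ ≤ 1 :=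
    na_sum hna _ _ zero_le_one fun i _ => by
      simpa using pow_le_one₀ (norm_nonneg r) hr
  calc ‖∑ i ∈ range l, r ^ i‖ * ‖1 - r‖ ≤ 1 * ‖1 - r‖ :=
        mul_le_mul_of_nonneg_right h1 (norm_nonneg _)
    _ = ‖1 - r‖ := one_mul _

/-- geometric sum written via binomial coefficients of `r - 1`. -/
lemma geom_sum_binom (r : K) (N : ℕ) :
    ∑ i ∈ range N, r ^ i = ∑ k ∈ range N, ((N.choose (k+1) : K)) * (r - 1) ^ k := by
  rcases eq_or_ne r 1 with rfl | hr
  · rcases Nat.eq_zero_or_pos N with rfl | hN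
    · simp
    · simp only [one_pow, Finset.sum_const, card_range, nsmul_eq_mul, mul_one, sub_self]
      rw [Finset.sum_eq_single 0]
      · simp
      · intro b _ hb; simp [zero_pow hb]
      · intro h; exact absurd (mem_range.mpr hN) h
  · have hr1 : r - 1 ≠ 0 := sub_ne_zero.mpr hr
    apply mul_right_cancel₀ hr1
    rw [geom_sum_mul, Finset.sum_mul]
    have hstep : ∀ k ∈ range N, (N.choose (k+1) : K) * (r-1)^k * (r-1)
        = (r-1)^(k+1) * (N.choose (k+1) : K) := by
      intro k _; ring
    rw [Finset.sum_congr rfl hstep]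
    have hb : r ^ N = ∑ m ∈ range (N+1), (r-1)^m * (N.choose m : K) := by
      have := add_pow (r - 1) (1 : K) N
      simp only [one_pow, mul_one, sub_add_cancel] at this
      exact this
    rw [hb, Finset.sum_range_succ' (fun m => (r-1)^m * (N.choose m : K)) N]
    simp

lemma norm_choose_le (hna : IsNonarchimedean (‖·‖ : K → ℝ)) (hpK : ‖(p : K)‖ = (p : ℝ)⁻¹)
    (m k : ℕ) : ‖((p ^ m).choose (k+1) : K)‖ ≤ (k+1) * (p : ℝ) ^ (-(m:ℤ)) := by
  have hp2 := hp.out.two_le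
  have hppos : (0:ℝ) < p := by positivity
  set e := (k+1).factorization p with he
  have hpe : p ^ e ∣ k + 1 := Nat.ordProj_dvd _ _
  have hple : p ^ e ≤ k + 1 := Nat.ordProj_le p (Nat.succ_ne_zero k)
  rcases le_or_gt m e with hme | hem
  · have h1 : ‖((p ^ m).choose (k+1) : K)‖ ≤ 1 := na_natCast hna _
    have h2 : (p:ℝ) ^ (m:ℕ) ≤ (k+1 : ℝ) := by
      calc ((p:ℝ)) ^ m ≤ (p:ℝ) ^ e := by
            apply pow_le_pow_right₀ (by exact_mod_cast hp2.trans' one_le_two) hme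
        _ ≤ (k+1 : ℝ) := by exact_mod_cast hple
    calc ‖((p ^ m).choose (k+1) : K)‖ ≤ 1 := h1
      _ ≤ ((k+1 : ℝ)) * (p:ℝ)^(-(m:ℤ)) := by
          rw [zpow_neg, zpow_natCast, ← div_eq_mul_inv, le_div_iff₀ (by positivity), one_mul]
          exact h2
  · have key : p ^ m * ((p^m - 1).choose k) = (p ^ m).choose (k+1) * (k+1) := by
      have := Nat.add_one_mul_choose_eq (p^m - 1) k
      have hpm1 : p^m - 1 + 1 = p ^ m := Nat.succ_pred_eq_of_pos (pow_pos hp.out.pos m)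
      rw [hpm1] at this
      exact this
    set u := (k+1) / p ^ e with hu
    have hue : p ^ e * u = k + 1 := Nat.ordProj_mul_ordCompl_eq_self (k+1) p
    have hcop : Nat.Coprime p u := Nat.coprime_ordCompl hp.out (Nat.succ_ne_zero k)
    have hdvd : p ^ (m - e) ∣ (p ^ m).choose (k+1) := by
      have h1 : p ^ (m - e) * p ^ e ∣ (p ^ m).choose (k+1) * p ^ e * u := by
        rw [show p^(m-e)*p^e = p^m from by rw [← pow_add]; congr 1; omega,
          mul_assoc, hue]
        exact ⟨_, key.symm⟩
      have h2 : p ^ (m - e) ∣ (p ^ m).choose (k+1) * u :=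
        (mul_dvd_mul_iff_right (pow_ne_zero e hp.out.pos.ne')).mp
          (by rwa [mul_right_comm ((p ^ m).choose (k+1)) (p^e) u] at h1)
      exact (Nat.Coprime.pow_left _ hcop).dvd_of_dvd_mul_right h2
    obtain ⟨s, hs⟩ := hdvd
    have hmain : ‖((p ^ m).choose (k+1) : K)‖ ≤ (p:ℝ) ^ (-((m - e : ℕ):ℤ)) := by
      rw [hs]
      push_cast
      rw [norm_mul, norm_pow, hpK]
      calc ((p:ℝ)⁻¹) ^ (m - e) * ‖(s:K)‖ ≤ ((p:ℝ)⁻¹) ^ (m - e) * 1 := by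
            apply mul_le_mul_of_nonneg_left (na_natCast hna _) (by positivity)
        _ = (p:ℝ) ^ (-((m - e : ℕ):ℤ)) := by
            rw [mul_one, inv_pow, zpow_neg, zpow_natCast]
    refine hmain.trans ?_
    have h4 : (p:ℝ) ^ (-((m - e : ℕ):ℤ)) = (p:ℝ)^(e:ℤ) * (p:ℝ)^(-(m:ℤ)) := by
      rw [← zpow_add₀ (by positivity : (p:ℝ) ≠ 0)]
      congr 1
      omega
    rw [h4]
    apply mul_le_mul_of_nonneg_right _ (by positivity)
    calc (p:ℝ)^(e:ℤ) = ((p^e : ℕ) : ℝ) := by push_cast [zpow_natCast]; ring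
      _ ≤ (k+1:ℝ) := by exact_mod_cast hple

lemma real_aux {ρ : ℝ} (h0 : 0 ≤ ρ) (h2 : ρ ≤ 1/2) {k : ℕ} (hk : 1 ≤ k) :
    (k+1 : ℝ) * ρ ^ k ≤ 2 * ρ := by
  obtain ⟨j, rfl⟩ : ∃ j, k = j + 1 := ⟨k - 1, by omega⟩
  have h1 : (j+2 : ℝ) ≤ 2 ^ (j+1) := by
    have h := Nat.lt_two_pow_self (n := j+1)
    have h' : (j + 2 : ℕ) ≤ 2 ^ (j+1) := h
    exact_mod_cast h'
  have h3 : (2*ρ) ^ j ≤ 1 := pow_le_one₀ (by linarith) (by linarith)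
  push_cast
  calc ((j:ℝ)+1+1) * ρ ^ (j+1) ≤ 2^(j+1) * ρ^(j+1) := by
        apply mul_le_mul_of_nonneg_right (by push_cast; linarith) (by positivity)
    _ = 2 * ρ * (2*ρ)^j := by rw [mul_pow]; ring
    _ ≤ 2 * ρ * 1 := mul_le_mul_of_nonneg_left h3 (by positivity)
    _ = 2 * ρ := by ring

/-- refined estimate for the geometric sum minus its number of terms -/
lemma geom_sub_card (hna : IsNonarchimedean (‖·‖ : K → ℝ)) (hpK : ‖(p : K)‖ = (p : ℝ)⁻¹)
    {r : K} (h : ‖r - 1‖ ≤ 1/2) (m : ℕ) :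
    ‖(∑ i ∈ range (p^m), r ^ i) - (p^m : ℕ)‖ ≤ 2 * ‖r - 1‖ * (p:ℝ) ^ (-(m:ℤ)) := by
  have hN : 1 ≤ p ^ m := Nat.one_le_pow _ _ hp.out.pos
  have hsplit : ∑ k ∈ range 1, ((p^m).choose (k+1) : K) * (r-1)^k
      + ∑ k ∈ Ico 1 (p^m), ((p^m).choose (k+1) : K) * (r-1)^k
      = ∑ k ∈ range (p^m), ((p^m).choose (k+1) : K) * (r-1)^k :=
    sum_range_add_sum_Ico _ hN
  have h0 : ∑ k ∈ range 1, ((p^m).choose (k+1) : K) * (r-1)^k = ((p^m : ℕ) : K) := by simp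
  rw [geom_sum_binom, ← hsplit, h0, add_sub_cancel_left]
  refine na_sum hna _ _ (by positivity) ?_
  intro k hk
  obtain ⟨hk1, _⟩ := mem_Ico.mp hk
  rw [norm_mul, norm_pow]
  calc ‖((p^m).choose (k+1) : K)‖ * ‖r-1‖^k
      ≤ ((k+1) * (p:ℝ)^(-(m:ℤ))) * ‖r-1‖^k :=
        mul_le_mul_of_nonneg_right (norm_choose_le hna hpK m k) (by positivity)
    _ = ((k+1:ℝ) * ‖r-1‖^k) * (p:ℝ)^(-(m:ℤ)) := by ring
    _ ≤ (2 * ‖r-1‖) * (p:ℝ)^(-(m:ℤ)) :=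
        mul_le_mul_of_nonneg_right (real_aux (norm_nonneg _) h hk1) (by positivity)

/-- one step: raising to the `p`-th power divides the distance to 1 by `p`. -/
lemma step_pow (hna : IsNonarchimedean (‖·‖ : K → ℝ)) (hpK : ‖(p : K)‖ = (p : ℝ)⁻¹)
    {r : K} (h : ‖1 - r‖ < (p : ℝ) ^ (-1 / ((p : ℝ) - 1))) :
    ‖1 - r ^ p‖ = ‖1 - r‖ * (p:ℝ)⁻¹ := by
  have hp2 := hp.out.two_le
  have hp1R : (1:ℝ) < p := by exact_mod_cast hp2
  have hCp1 : (p : ℝ) ^ (-1 / ((p : ℝ) - 1)) < 1 := by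
    apply Real.rpow_lt_one_of_one_lt_of_neg hp1R
    rw [div_neg_iff]; right; constructor <;> [linarith; linarith]
  have hr1 : ‖r - 1‖ < 1 := by rw [← norm_neg, neg_sub]; exact h.trans hCp1
  have hgeom : ‖∑ i ∈ range p, r ^ i‖ = (p:ℝ)⁻¹ := by
    have hsplit : ∑ k ∈ range 1, ((p).choose (k+1) : K) * (r-1)^k
        + ∑ k ∈ Ico 1 p, ((p).choose (k+1) : K) * (r-1)^k
        = ∑ k ∈ range p, ((p).choose (k+1) : K) * (r-1)^k :=
      sum_range_add_sum_Ico _ hp.out.pos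
    have h0 : ∑ k ∈ range 1, ((p).choose (k+1) : K) * (r-1)^k = ((p : ℕ) : K) := by simp
    have htail : ‖∑ k ∈ Ico 1 p, ((p).choose (k+1) : K) * (r-1)^k‖ < ‖((p:ℕ) : K)‖ := by
      have hC : ∀ k ∈ Ico 1 p, ‖((p).choose (k+1) : K) * (r-1)^k‖
          ≤ max ((p:ℝ)⁻¹ * ‖r-1‖) (‖r-1‖^(p-1)) := by
        intro k hk
        obtain ⟨hk1, hkp⟩ := mem_Ico.mp hk
        rw [norm_mul, norm_pow]
        rcases eq_or_lt_of_le (Nat.succ_le_of_lt hkp) with heq | hlt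
        · have hkval : k = p - 1 := by omega
          subst hkval
          have hch : (p).choose (p-1+1) = 1 := by
            rw [show p - 1 + 1 = p from by omega]; exact Nat.choose_self p
          rw [hch]
          simp only [Nat.cast_one, norm_one, one_mul]
          exact le_max_right _ _
        · have hdvd : (p:ℕ) ∣ (p).choose (k+1) := hp.out.dvd_choose_self (by omega) hlt
          obtain ⟨s, hs⟩ := hdvd
          refine le_trans ?_ (le_max_left _ _)
          have h1 : ‖((p).choose (k+1) : K)‖ ≤ (p:ℝ)⁻¹ := by
            rw [hs]; push_cast; rw [norm_mul, hpK]
            calc (p:ℝ)⁻¹ * ‖(s:K)‖ ≤ (p:ℝ)⁻¹ * 1 :=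
                  mul_le_mul_of_nonneg_left (na_natCast hna _) (by positivity)
              _ = (p:ℝ)⁻¹ := mul_one _
          calc ‖((p).choose (k+1) : K)‖ * ‖r-1‖^k ≤ (p:ℝ)⁻¹ * ‖r-1‖^k :=
                mul_le_mul_of_nonneg_right h1 (by positivity)
            _ ≤ (p:ℝ)⁻¹ * ‖r-1‖ := by
                apply mul_le_mul_of_nonneg_left ?_ (by positivity)
                calc ‖r-1‖^k ≤ ‖r-1‖^1 :=
                      pow_le_pow_of_le_one (norm_nonneg _) hr1.le hk1
                  _ = ‖r-1‖ := pow_one _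
      rw [hpK]
      refine lt_of_le_of_lt (na_sum hna _ _ (le_max_iff.mpr (Or.inl (by positivity))) hC) ?_
      apply max_lt
      · have h5 : (p:ℝ)⁻¹ * ‖r-1‖ < (p:ℝ)⁻¹ * 1 := by
          exact mul_lt_mul_of_pos_left hr1 (by positivity)
        simpa using h5
      · have hpm1 : p - 1 ≠ 0 := by omega
        have h6 : ‖r-1‖^(p-1) < ((p : ℝ) ^ (-1 / ((p : ℝ) - 1)))^(p-1) := by
          apply pow_lt_pow_left₀ (by rwa [← norm_neg, neg_sub] at h) (norm_nonneg _) hpm1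
        refine h6.trans_le (le_of_eq ?_)
        · rw [← Real.rpow_natCast ((p : ℝ) ^ (-1 / ((p : ℝ) - 1))) (p-1),
                ← Real.rpow_mul (by positivity)]
          have hexp : (-1 / ((p:ℝ) - 1)) * ((p-1 : ℕ) : ℝ) = -1 := by
            have hc : ((p - 1 : ℕ) : ℝ) = (p:ℝ) - 1 := by
              push_cast [Nat.cast_sub hp.out.one_le]; ring
            rw [hc]; exact div_mul_cancel₀ (-1) (by linarith : (p:ℝ)-1 ≠ 0)
          rw [hexp, Real.rpow_neg_one]
    rw [geom_sum_binom, ← hsplit, h0, na_add_eq hna htail, hpK]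
  rw [one_sub_pow_eq r p, norm_mul, hgeom]; ring

lemma norm_one_sub_pow_pn (hna : IsNonarchimedean (‖·‖ : K → ℝ)) (hpK : ‖(p : K)‖ = (p : ℝ)⁻¹)
    {q : K} (hq : ‖1 - q‖ < (p : ℝ) ^ (-1 / ((p : ℝ) - 1))) (n : ℕ) :
    ‖1 - q ^ (p ^ n)‖ = ‖1 - q‖ * (p:ℝ) ^ (-(n:ℤ)) ∧
      ‖1 - q ^ (p ^ n)‖ < (p : ℝ) ^ (-1 / ((p : ℝ) - 1)) := by
  have hp1R : (1:ℝ) < p := by exact_mod_cast hp.out.two_le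
  induction n with
  | zero => simpa using hq
  | succ n ih =>
    have hpow : q ^ (p ^ (n+1)) = (q ^ (p ^ n)) ^ p := by
      rw [← pow_mul, pow_succ]
    have hstep := step_pow hna hpK ih.2
    rw [hpow]
    constructor
    · rw [hstep, ih.1]
      rw [mul_assoc]
      congr 1
      rw [← zpow_neg_one, ← zpow_add₀ (by positivity : (p:ℝ) ≠ 0)]
      congr 1
      omega
    · rw [hstep]
      calc ‖1 - q ^ p ^ n‖ * (p:ℝ)⁻¹ ≤ ‖1 - q ^ p ^ n‖ * 1 := by
            apply mul_le_mul_of_nonneg_left _ (norm_nonneg _)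
            rw [inv_le_one_iff₀]; right; linarith
        _ = ‖1 - q ^ p ^ n‖ := mul_one _
        _ < _ := ih.2

lemma qNum_add (q : K) (a b : ℕ) : qNum q (a + b) = qNum q a + q ^ a * qNum q b := by
  rcases eq_or_ne q 1 with rfl | hq
  · simp [qNum]
  · have h1 : (1:K) - q ≠ 0 := sub_ne_zero.mpr (Ne.symm hq)
    unfold qNum
    field_simp
    rw [pow_add]
    ring

lemma qNum_mul (q : K) (i b : ℕ) (hb : q ^ b ≠ 1) :
    qNum q (i * b) = qNum (q ^ b) i * qNum q b := by
  have h2 : (1:K) - q ^ b ≠ 0 := sub_ne_zero.mpr (Ne.symm hb)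
  unfold qNum
  rw [div_mul_div_comm, mul_comm (1 - (q^b)^i) (1 - q^b), mul_div_mul_left _ _ h2,
    ← pow_mul, mul_comm b i]

/-- power sums of `q`-numbers are almost divisible by `p^m`. -/
lemma Wk_bound (hna : IsNonarchimedean (‖·‖ : K → ℝ)) (hpK : ‖(p : K)‖ = (p : ℝ)⁻¹)
    {Q : K} (hQ2 : ‖1 - Q‖ ≤ 1/2) (m : ℕ) {k : ℕ} (hk : 1 ≤ k) :
    ‖∑ i ∈ range (p^m), (qNum Q i)^k‖
      ≤ 2 * ‖1-Q‖ * (p:ℝ)^(-(m:ℤ)) * (‖1-Q‖⁻¹)^k := by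
  have hQle : ‖Q‖ ≤ 1 := by
    rcases lt_or_ge (‖1 - Q‖) 1 with h | h
    · exact (na_norm_of_one_sub_lt hna h).le
    · linarith
  have h1 : ∀ i : ℕ, (qNum Q i)^k = (1 - Q^i)^k * ((1 - Q)⁻¹)^k := by
    intro i; rw [qNum, div_pow, div_eq_mul_inv, inv_pow]
  have h2 : ∀ i : ℕ, (1 - Q^i)^k
      = ∑ l ∈ range (k+1), (-1)^l * ((Q^l)^i) * (k.choose l : K) := by
    intro i
    have := add_pow (-(Q^i)) (1 : K) k
    simp only [one_pow, mul_one] at this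
    rw [show (1 : K) - Q^i = -(Q^i) + 1 by ring, this]
    refine Finset.sum_congr rfl fun l _ => ?_
    rw [neg_pow, ← pow_mul, mul_comm i l, pow_mul]
  have h3 : ∑ i ∈ range (p^m), (1 - Q^i)^k
      = ∑ l ∈ range (k+1), (-1)^l * (k.choose l : K)
          * ((∑ i ∈ range (p^m), (Q^l)^i) - ((p^m : ℕ) : K)) := by
    rw [Finset.sum_congr rfl fun i _ => h2 i, Finset.sum_comm]
    have hzero : ∑ l ∈ range (k+1), (-1 : K)^l * (k.choose l : K) = 0 := by
      have := add_pow (-1 : K) (1 : K) k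
      simp only [one_pow, mul_one, neg_add_cancel] at this
      rw [zero_pow (by omega : k ≠ 0)] at this
      exact this.symm
    have hz2 : ∑ l ∈ range (k+1), (-1 : K)^l * (k.choose l : K) * ((p^m : ℕ) : K) = 0 := by
      rw [← Finset.sum_mul, hzero, zero_mul]
    rw [← sub_zero (∑ l ∈ range (k+1), ∑ i ∈ range (p^m), (-1)^l * (Q^l)^i * (k.choose l:K)),
      ← hz2, ← Finset.sum_sub_distrib]
    refine Finset.sum_congr rfl fun l _ => ?_
    rw [← Finset.sum_mul, Finset.sum_mul]
    have hcomm : ∑ i ∈ range (p^m), (-1:K)^l * (Q^l)^i * (k.choose l : K)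
        = (-1)^l * (k.choose l : K) * ∑ i ∈ range (p^m), (Q^l)^i := by
      rw [Finset.mul_sum]; refine Finset.sum_congr rfl fun i _ => by ring
    rw [hcomm]; ring
  have h4 : ‖∑ i ∈ range (p^m), (1 - Q^i)^k‖ ≤ 2 * ‖1-Q‖ * (p:ℝ)^(-(m:ℤ)) := by
    rw [h3]
    refine na_sum hna _ _ (by positivity) fun l _ => ?_
    rw [norm_mul, norm_mul, norm_pow, norm_neg, norm_one, one_pow, one_mul]
    have hQl : ‖(Q^l) - 1‖ ≤ 1/2 := by
      rw [norm_sub_rev]; exact (na_one_sub_pow_le hna hQle l).trans hQ2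
    have hgeo := geom_sub_card hna hpK hQl m
    calc ‖(k.choose l : K)‖ * ‖(∑ i ∈ range (p^m), (Q^l)^i) - ((p^m : ℕ) : K)‖
        ≤ 1 * (2 * ‖Q^l - 1‖ * (p:ℝ)^(-(m:ℤ))) :=
          mul_le_mul (na_natCast hna _) hgeo (norm_nonneg _) zero_le_one
      _ ≤ 1 * (2 * ‖1 - Q‖ * (p:ℝ)^(-(m:ℤ))) := by
          have hle : ‖Q^l - 1‖ ≤ ‖1 - Q‖ := by
            rw [norm_sub_rev]; exact na_one_sub_pow_le hna hQle l
          have hp0 : (0:ℝ) ≤ (p:ℝ)^(-(m:ℤ)) := by positivity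
          nlinarith
      _ = 2 * ‖1-Q‖ * (p:ℝ)^(-(m:ℤ)) := one_mul _
  calc ‖∑ i ∈ range (p^m), (qNum Q i)^k‖
      = ‖∑ i ∈ range (p^m), (1 - Q^i)^k‖ * (‖1-Q‖⁻¹)^k := by
        rw [Finset.sum_congr rfl fun i _ => h1 i, ← Finset.sum_mul, norm_mul,
          norm_pow, norm_inv]
    _ ≤ (2 * ‖1-Q‖ * (p:ℝ)^(-(m:ℤ))) * (‖1-Q‖⁻¹)^k :=
        mul_le_mul_of_nonneg_right h4 (by positivity)

/-- the key cancellation: averaging a shifted power against the ball. -/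
lemma inner_bound (hna : IsNonarchimedean (‖·‖ : K → ℝ)) (hpK : ‖(p : K)‖ = (p : ℝ)⁻¹)
    {Q u β : K} (hQ2 : ‖1 - Q‖ ≤ 1/2) (hu : ‖u‖ ≤ 1)
    {Λ : ℝ} (hΛ : 1 ≤ Λ) (hβ : ‖β‖ ≤ ‖1-Q‖ * Λ) (m : ℕ) {j d : ℕ} (hj : j < d) :
    ‖∑ i ∈ range (p^m), ((u + β * qNum Q i)^j - Q^i * u^j)‖
      ≤ 2 * ‖1-Q‖ * Λ^d * (p:ℝ)^(-(m:ℤ)) := by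
  have hQΛ : 0 ≤ ‖1-Q‖ * Λ := mul_nonneg (norm_nonneg _) (by linarith)
  have hdecomp : ∑ i ∈ range (p^m), ((u + β * qNum Q i)^j - Q^i * u^j)
      = (((p^m : ℕ) : K) - ∑ i ∈ range (p^m), Q^i) * u^j
        + ∑ k ∈ Ico 1 (j+1),
            β^k * (∑ i ∈ range (p^m), (qNum Q i)^k) * u^(j-k) * (j.choose k : K) := by
    have e1 : ∀ i : ℕ, (u + β * qNum Q i)^j
        = ∑ k ∈ range (j+1), β^k * (qNum Q i)^k * u^(j-k) * (j.choose k : K) := by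
      intro i
      rw [show u + β * qNum Q i = β * qNum Q i + u by ring, add_pow]
      refine Finset.sum_congr rfl fun k _ => ?_
      rw [mul_pow]
    calc ∑ i ∈ range (p^m), ((u + β * qNum Q i)^j - Q^i * u^j)
        = (∑ i ∈ range (p^m), ∑ k ∈ range (j+1),
            β^k * (qNum Q i)^k * u^(j-k) * (j.choose k : K))
          - ∑ i ∈ range (p^m), Q^i * u^j := by
          rw [← Finset.sum_sub_distrib]
          exact Finset.sum_congr rfl fun i _ => by rw [e1 i]
      _ = (∑ k ∈ range (j+1),
            β^k * (∑ i ∈ range (p^m), (qNum Q i)^k) * u^(j-k) * (j.choose k : K))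
          - (∑ i ∈ range (p^m), Q^i) * u^j := by
          rw [Finset.sum_comm, Finset.sum_mul]
          congr 1
          refine Finset.sum_congr rfl fun k _ => ?_
          simp only [Finset.mul_sum, Finset.sum_mul]
      _ = _ := by
          rw [← sum_range_add_sum_Ico
            (fun k => β^k * (∑ i ∈ range (p^m), (qNum Q i)^k) * u^(j-k) * (j.choose k : K))
            (Nat.succ_le_succ (Nat.zero_le j))]
          rw [Finset.sum_range_one]
          simp only [pow_zero, one_mul, Nat.sub_zero, Nat.choose_zero_right, Nat.cast_one,
            mul_one]
          rw [Finset.sum_const, card_range, nsmul_eq_mul, mul_one]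
          simp only [Nat.succ_eq_add_one, zero_add]
          ring
  rw [hdecomp]
  have hb1 : ‖(((p^m : ℕ) : K) - ∑ i ∈ range (p^m), Q^i) * u^j‖
      ≤ 2 * ‖1-Q‖ * (p:ℝ)^(-(m:ℤ)) := by
    rw [norm_mul, norm_pow]
    calc ‖((p^m : ℕ) : K) - ∑ i ∈ range (p^m), Q^i‖ * ‖u‖^j
        ≤ (2 * ‖Q - 1‖ * (p:ℝ)^(-(m:ℤ))) * 1 := by
          apply mul_le_mul _ (pow_le_one₀ (norm_nonneg _) hu) (by positivity) (by positivity)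
          rw [← norm_neg, neg_sub]
          exact geom_sub_card hna hpK (norm_sub_rev Q 1 ▸ hQ2) m
      _ = 2 * ‖1 - Q‖ * (p:ℝ)^(-(m:ℤ)) := by rw [norm_sub_rev, mul_one]
  have hb2 : ‖∑ k ∈ Ico 1 (j+1),
      β^k * (∑ i ∈ range (p^m), (qNum Q i)^k) * u^(j-k) * (j.choose k : K)‖
      ≤ 2 * ‖1-Q‖ * Λ^d * (p:ℝ)^(-(m:ℤ)) := by
    refine na_sum hna _ _ (by positivity) fun k hk => ?_
    obtain ⟨hk1, hk2⟩ := mem_Ico.mp hk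
    rw [norm_mul, norm_mul, norm_mul, norm_pow, norm_pow]
    have hW := Wk_bound hna hpK hQ2 m hk1
    have hβk : ‖β‖^k ≤ (‖1-Q‖ * Λ)^k := pow_le_pow_left₀ (norm_nonneg _) hβ k
    have hcancel : (‖1-Q‖ * ‖1-Q‖⁻¹)^k ≤ 1 := by
      rcases eq_or_ne (‖1-Q‖) 0 with h0 | h0
      · rw [h0, zero_mul, zero_pow (by omega : k ≠ 0)]; norm_num
      · rw [mul_inv_cancel₀ h0, one_pow]
    have hΛ0 : (0:ℝ) ≤ Λ := by linarith
    have n1 : (0:ℝ) ≤ (‖1-Q‖ * Λ)^k := pow_nonneg (mul_nonneg (norm_nonneg _) hΛ0) k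
    have n2 : (0:ℝ) ≤ 2 * ‖1-Q‖ * (p:ℝ)^(-(m:ℤ)) * (‖1-Q‖⁻¹)^k := by positivity
    have n3 : (0:ℝ) ≤ 2 * ‖1-Q‖ * (p:ℝ)^(-(m:ℤ)) := by positivity
    have t1 : ‖β‖^k * ‖∑ i ∈ range (p^m), (qNum Q i)^k‖
        ≤ (‖1-Q‖*Λ)^k * (2 * ‖1-Q‖ * (p:ℝ)^(-(m:ℤ)) * (‖1-Q‖⁻¹)^k) :=
      mul_le_mul hβk hW (norm_nonneg _) n1
    have t2 : ‖β‖^k * ‖∑ i ∈ range (p^m), (qNum Q i)^k‖ * ‖u‖^(j-k)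
        ≤ (‖1-Q‖*Λ)^k * (2 * ‖1-Q‖ * (p:ℝ)^(-(m:ℤ)) * (‖1-Q‖⁻¹)^k) := by
      calc ‖β‖^k * ‖∑ i ∈ range (p^m), (qNum Q i)^k‖ * ‖u‖^(j-k)
          ≤ ((‖1-Q‖*Λ)^k * (2 * ‖1-Q‖ * (p:ℝ)^(-(m:ℤ)) * (‖1-Q‖⁻¹)^k)) * 1 :=
            mul_le_mul t1 (pow_le_one₀ (norm_nonneg _) hu)
              (pow_nonneg (norm_nonneg _) _)
              (mul_nonneg n1 n2)
        _ = _ := mul_one _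
    have t3 : ‖β‖^k * ‖∑ i ∈ range (p^m), (qNum Q i)^k‖ * ‖u‖^(j-k) * ‖(j.choose k : K)‖
        ≤ (‖1-Q‖*Λ)^k * (2 * ‖1-Q‖ * (p:ℝ)^(-(m:ℤ)) * (‖1-Q‖⁻¹)^k) := by
      calc ‖β‖^k * ‖∑ i ∈ range (p^m), (qNum Q i)^k‖ * ‖u‖^(j-k) * ‖(j.choose k : K)‖
          ≤ ((‖1-Q‖*Λ)^k * (2 * ‖1-Q‖ * (p:ℝ)^(-(m:ℤ)) * (‖1-Q‖⁻¹)^k)) * 1 :=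
            mul_le_mul t2 (na_natCast hna _)
              (norm_nonneg _)
              (mul_nonneg n1 n2)
        _ = _ := mul_one _
    refine t3.trans ?_
    have hrw : (‖1-Q‖*Λ)^k * (2 * ‖1-Q‖ * (p:ℝ)^(-(m:ℤ)) * (‖1-Q‖⁻¹)^k)
        = (2 * ‖1-Q‖ * (p:ℝ)^(-(m:ℤ))) * ((‖1-Q‖ * ‖1-Q‖⁻¹)^k * Λ^k) := by
      rw [mul_pow, mul_pow]; ring
    rw [hrw]
    have hkd : k ≤ d := by omega
    have t4 : (‖1-Q‖ * ‖1-Q‖⁻¹)^k * Λ^k ≤ 1 * Λ^d := by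
      apply mul_le_mul hcancel (pow_le_pow_right₀ hΛ hkd)
        (pow_nonneg hΛ0 k) zero_le_one
    calc (2 * ‖1-Q‖ * (p:ℝ)^(-(m:ℤ))) * ((‖1-Q‖ * ‖1-Q‖⁻¹)^k * Λ^k)
        ≤ (2 * ‖1-Q‖ * (p:ℝ)^(-(m:ℤ))) * (1 * Λ^d) :=
          mul_le_mul_of_nonneg_left t4 n3
      _ = 2 * ‖1-Q‖ * Λ^d * (p:ℝ)^(-(m:ℤ)) := by ring
  refine le_trans (hna _ _) (max_le (hb1.trans ?_) hb2)
  have hΛd : 1 ≤ Λ^d := one_le_pow₀ hΛ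
  have h0 : (0:ℝ) ≤ 2 * ‖1-Q‖ * (p:ℝ)^(-(m:ℤ)) := by positivity
  nlinarith

lemma key_estimate (hna : IsNonarchimedean (‖·‖ : K → ℝ)) (hpK : ‖(p : K)‖ = (p : ℝ)⁻¹)
    {q : K} (hq : ‖1 - q‖ < (p : ℝ) ^ (-1 / ((p : ℝ) - 1))) (hq1 : q ≠ 1)
    (d : ℕ) (c : ℕ → K) {n : ℕ} (hn : 1 ≤ n) (a m : ℕ) :
    ‖(∑ i ∈ range (p^m), ∑ j ∈ range d, c j * (qNum q (a + i * p^n))^j)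
      - (∑ i ∈ range (p^m), (q^(p^n))^i) * (∑ j ∈ range d, c j * (qNum q a)^j)‖
      ≤ (2 * (∑ j ∈ range d, ‖c j‖) * (‖1-q‖⁻¹)^d * ‖1-q‖)
          * ((p:ℝ)^(-(m:ℤ)) * (p:ℝ)^(-(n:ℤ))) := by
  have hp2 := hp.out.two_le
  have hp1R : (1:ℝ) < p := by exact_mod_cast hp2
  have hCp1 : (p : ℝ) ^ (-1 / ((p : ℝ) - 1)) < 1 := by
    apply Real.rpow_lt_one_of_one_lt_of_neg hp1R
    rw [div_neg_iff]; right; constructor <;> linarith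
  set lam := ‖1 - q‖ with hlam
  have hlam0 : 0 < lam := norm_pos_iff.mpr (sub_ne_zero.mpr (Ne.symm hq1))
  have hlam1 : lam < 1 := hq.trans hCp1
  set Q := q ^ (p ^ n) with hQdef
  obtain ⟨hQn, hQCp⟩ := norm_one_sub_pow_pn hna hpK hq n
  have hQnorm : ‖1 - Q‖ = lam * (p:ℝ)^(-(n:ℤ)) := hQn
  have hQ1 : Q ≠ 1 := by
    intro hcon
    rw [hcon, sub_self, norm_zero] at hQnorm
    have hpos : (0:ℝ) < lam * (p:ℝ)^(-(n:ℤ)) := by positivity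
    linarith
  have hpn_half : (p:ℝ)^(-(n:ℤ)) ≤ 1/2 := by
    calc (p:ℝ)^(-(n:ℤ)) ≤ (p:ℝ)^(-(1:ℤ)) := by
          apply zpow_le_zpow_right₀ hp1R.le (by omega)
      _ = (p:ℝ)⁻¹ := by simp
      _ ≤ 1/2 := by
          rw [inv_le_comm₀ (by linarith) (by norm_num)]
          norm_num
          exact_mod_cast hp2
  have hQ2 : ‖1 - Q‖ ≤ 1/2 := by
    rw [hQnorm]
    calc lam * (p:ℝ)^(-(n:ℤ)) ≤ 1 * (1/2) := by
          apply mul_le_mul hlam1.le hpn_half (by positivity) zero_le_one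
      _ = 1/2 := one_mul _
  have hqnorm1 : ‖q‖ = 1 := na_norm_of_one_sub_lt hna (hq.trans hCp1)
  set u := qNum q a with hudef
  have hu : ‖u‖ ≤ 1 := by
    rw [hudef, qNum, norm_div, div_le_one hlam0]
    exact na_one_sub_pow_le hna hqnorm1.le a
  set β := q ^ a * qNum q (p ^ n) with hβdef
  have hβnorm : ‖β‖ = (p:ℝ)^(-(n:ℤ)) := by
    rw [hβdef, norm_mul, norm_pow, hqnorm1, one_pow, one_mul, qNum, norm_div, ← hQdef,
      hQnorm]
    field_simp
    rw [hlam]; ring_nf; exact mul_inv_cancel₀ hlam0.ne'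
  have hβ : ‖β‖ ≤ ‖1 - Q‖ * lam⁻¹ := by
    rw [hβnorm, hQnorm, mul_right_comm, mul_inv_cancel₀ hlam0.ne', one_mul]
  have hΛ : 1 ≤ lam⁻¹ := (one_le_inv₀ hlam0).mpr hlam1.le
  have hQb1 : q ^ (p^n) ≠ 1 := by rw [← hQdef]; exact hQ1
  have hX : ∀ i : ℕ, qNum q (a + i * p^n) = u + β * qNum Q i := by
    intro i
    rw [qNum_add, qNum_mul q i (p^n) hQb1, hβdef, hudef, ← hQdef]
    ring
  have hsplit : (∑ i ∈ range (p^m), ∑ j ∈ range d, c j * (qNum q (a + i * p^n))^j)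
      - (∑ i ∈ range (p^m), Q^i) * (∑ j ∈ range d, c j * u^j)
      = ∑ j ∈ range d, c j * (∑ i ∈ range (p^m), ((u + β * qNum Q i)^j - Q^i * u^j)) := by
    rw [Finset.sum_comm, Finset.mul_sum, ← Finset.sum_sub_distrib]
    refine Finset.sum_congr rfl fun j _ => ?_
    rw [Finset.sum_mul, ← Finset.sum_sub_distrib, Finset.mul_sum]
    refine Finset.sum_congr rfl fun i _ => ?_
    rw [hX i]; ring
  rw [hsplit]
  have hCc : (0:ℝ) ≤ ∑ j ∈ range d, ‖c j‖ := Finset.sum_nonneg fun _ _ => norm_nonneg _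
  refine na_sum hna _ _ ?_ fun j hj => ?_
  · exact mul_nonneg (mul_nonneg (mul_nonneg (mul_nonneg (by norm_num) hCc)
      (by positivity)) hlam0.le) (by positivity)
  · rw [norm_mul]
    have hIB := inner_bound hna hpK hQ2 hu hΛ hβ m (mem_range.mp hj)
    have hcle : ‖c j‖ ≤ ∑ j ∈ range d, ‖c j‖ :=
      Finset.single_le_sum (fun _ _ => norm_nonneg _) hj
    calc ‖c j‖ * ‖∑ i ∈ range (p^m), ((u + β * qNum Q i)^j - Q^i * u^j)‖
        ≤ (∑ j ∈ range d, ‖c j‖) * (2 * ‖1-Q‖ * (lam⁻¹)^d * (p:ℝ)^(-(m:ℤ))) :=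
          mul_le_mul hcle hIB (norm_nonneg _) hCc
      _ = (2 * (∑ j ∈ range d, ‖c j‖) * (lam⁻¹)^d * lam)
            * ((p:ℝ)^(-(m:ℤ)) * (p:ℝ)^(-(n:ℤ))) := by
          rw [hQnorm]; ring

end AuxLemmas

/-- for any polynomial `P ∈ K[[x]_q]`, the Radon-Nikodym derivative of
`μ_{P,q}` recovers `P`: `lim_n [p^n]_q μ_{P,q}(x + p^n ℤ_p) = P(x)` for all `x ∈ ℤ_p`,
where `P(x) = ∑_j c_j [x]_q^j` via the continuous extension `bq` of `x ↦ [x]_q`. -/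
theorem mu_Pq_derivative_recovers_P
(q : K) (hna : IsNonarchimedean (‖·‖ : K → ℝ)) (hpK : ‖(p : K)‖ = (p : ℝ)⁻¹)
    (hq : ‖1 - q‖ < (p : ℝ) ^ (-1 / ((p : ℝ) - 1))) (hq1 : q ≠ 1)
    (d : ℕ) (c : ℕ → K) (μP : PadicInt p → ℕ → K)
    (hμP : ∀ (x : PadicInt p) (n : ℕ) (a : ℕ), ‖x - (a : PadicInt p)‖ ≤ (p : ℝ) ^ (-(n : ℤ)) →
      Tendsto (fun m => (qNum q (p ^ (m + n)))⁻¹ *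
        ∑ i ∈ range (p ^ m), ∑ j ∈ range d, c j * (qNum q (a + i * p ^ n)) ^ j)
        atTop (𝓝 (μP x n)))
    (bq : PadicInt p → K) (hbq : Continuous bq) (hbqNat : ∀ m : ℕ, bq (m : PadicInt p) = qNum q m) :
    ∀ x : PadicInt p,
      Tendsto (fun n => qNum q (p ^ n) * μP x n) atTop
        (𝓝 (∑ j ∈ range d, c j * (bq x) ^ j)) := by
  intro x
  have hp2 := hp.out.two_le
  have hp1R : (1:ℝ) < p := by exact_mod_cast hp2
  have hlam0 : 0 < ‖1 - q‖ := norm_pos_iff.mpr (sub_ne_zero.mpr (Ne.symm hq1))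
  set B0 : ℝ := 2 * (∑ j ∈ range d, ‖c j‖) * (‖1-q‖⁻¹)^d * ‖1-q‖ with hB0
  have happr : ∀ n : ℕ, ‖x - ((x.appr n : ℕ) : PadicInt p)‖ ≤ (p:ℝ)^(-(n:ℤ)) := by
    intro n
    have h := PadicInt.appr_spec n x
    rw [Ideal.mem_span_singleton] at h
    obtain ⟨y, hy⟩ := h
    rw [hy, norm_mul, PadicInt.norm_p_pow]
    calc (p:ℝ)^(-(n:ℤ)) * ‖y‖ ≤ (p:ℝ)^(-(n:ℤ)) * 1 :=
          mul_le_mul_of_nonneg_left (PadicInt.norm_le_one y) (by positivity)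
      _ = (p:ℝ)^(-(n:ℤ)) := mul_one _
  have hpinv : Tendsto (fun n : ℕ => (p:ℝ)^(-(n:ℤ))) atTop (𝓝 0) := by
    have h1 : ∀ n : ℕ, (p:ℝ)^(-(n:ℤ)) = ((p:ℝ)⁻¹)^n := fun n => by
      rw [zpow_neg, zpow_natCast, inv_pow]
    simp only [h1]
    exact tendsto_pow_atTop_nhds_zero_of_lt_one (by positivity)
      ((inv_lt_one₀ (by positivity)).mpr hp1R)
  have htendsto_appr : Tendsto (fun n => ((x.appr n : ℕ) : PadicInt p)) atTop (𝓝 x) := by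
    rw [tendsto_iff_norm_sub_tendsto_zero]
    refine squeeze_zero (fun n => norm_nonneg _) (fun n => ?_) hpinv
    rw [norm_sub_rev]; exact happr n
  set g : PadicInt p → K := fun z => ∑ j ∈ range d, c j * (bq z)^j with hg
  have hgc : Continuous g := continuous_finset_sum _ fun j _ => continuous_const.mul (hbq.pow j)
  have hmain : ∀ n : ℕ, 1 ≤ n →
      ‖qNum q (p^n) * μP x n - g ((x.appr n : ℕ) : PadicInt p)‖ ≤ B0 * (p:ℝ)^(-(n:ℤ)) := by
    intro n hn
    set a := x.appr n with ha
    have hT := hμP x n a (happr n)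
    obtain ⟨hQn, _⟩ := norm_one_sub_pow_pn hna hpK hq n
    have hQne : (1:K) - q ^ (p^n) ≠ 0 := by
      intro hcon
      rw [hcon, norm_zero] at hQn
      have : (0:ℝ) < ‖1-q‖ * (p:ℝ)^(-(n:ℤ)) := by positivity
      linarith
    have hqn_ne : qNum q (p^n) ≠ 0 :=
      div_ne_zero hQne (sub_ne_zero.mpr (Ne.symm hq1))
    set Pa : K := ∑ j ∈ range d, c j * (qNum q a)^j with hPa
    have hbound : ∀ m : ℕ,
        ‖qNum q (p^n) * ((qNum q (p ^ (m + n)))⁻¹ *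
          ∑ i ∈ range (p ^ m), ∑ j ∈ range d, c j * (qNum q (a + i * p ^ n)) ^ j) - Pa‖
        ≤ B0 * (p:ℝ)^(-(n:ℤ)) := by
      intro m
      set Sm : K := ∑ i ∈ range (p ^ m), ∑ j ∈ range d, c j * (qNum q (a + i * p ^ n)) ^ j
      set G : K := ∑ i ∈ range (p^m), (q^(p^n))^i with hG
      have hqpow : q ^ (p^(m+n)) = (q^(p^n))^(p^m) := by
        rw [← pow_mul, ← pow_add, Nat.add_comm n m]
      have hfact : qNum q (p^(m+n)) = qNum q (p^n) * G := by
        rw [qNum, qNum, hqpow, one_sub_pow_eq (q^(p^n)) (p^m), ← hG]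
        rw [mul_comm G (1 - q^(p^n)), mul_div_assoc]
        ring
      obtain ⟨hQmn, _⟩ := norm_one_sub_pow_pn hna hpK hq (m+n)
      have hGnorm : ‖G‖ = (p:ℝ)^(-(m:ℤ)) := by
        have h2 : ‖1 - (q^(p^n))^(p^m)‖ = ‖G‖ * ‖1 - q^(p^n)‖ := by
          rw [one_sub_pow_eq (q^(p^n)) (p^m), ← hG, norm_mul]
        rw [← hqpow, hQmn, hQn] at h2
        have h3 : (p:ℝ)^(-((m+n:ℕ):ℤ)) = (p:ℝ)^(-(m:ℤ)) * (p:ℝ)^(-(n:ℤ)) := by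
          rw [← zpow_add₀ (by positivity : (p:ℝ) ≠ 0)]
          congr 1; push_cast; ring
        rw [h3] at h2
        have h4 : ‖1-q‖ * ((p:ℝ)^(-(m:ℤ)) * (p:ℝ)^(-(n:ℤ)))
            = ‖G‖ * (‖1-q‖ * (p:ℝ)^(-(n:ℤ))) := h2
        have h5 : (0:ℝ) < ‖1-q‖ * (p:ℝ)^(-(n:ℤ)) := by positivity
        have h6 : ‖G‖ * (‖1-q‖ * (p:ℝ)^(-(n:ℤ)))
            = (p:ℝ)^(-(m:ℤ)) * (‖1-q‖ * (p:ℝ)^(-(n:ℤ))) := by rw [← h4]; ring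
        exact mul_right_cancel₀ h5.ne' h6
      have hGne : G ≠ 0 := by
        intro hcon
        rw [hcon, norm_zero] at hGnorm
        have : (0:ℝ) < (p:ℝ)^(-(m:ℤ)) := by positivity
        linarith
      have hcomb : qNum q (p^n) * ((qNum q (p ^ (m + n)))⁻¹ * Sm) = G⁻¹ * Sm := by
        rw [hfact, mul_inv]
        field_simp
      rw [hcomb]
      have hsub : G⁻¹ * Sm - Pa = G⁻¹ * (Sm - G * Pa) := by
        rw [mul_sub, ← mul_assoc, inv_mul_cancel₀ hGne, one_mul]
      rw [hsub, norm_mul, norm_inv, hGnorm]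
      have hKE := key_estimate hna hpK hq hq1 d c hn a m
      calc ((p:ℝ)^(-(m:ℤ)))⁻¹ * ‖Sm - G * Pa‖
          ≤ ((p:ℝ)^(-(m:ℤ)))⁻¹ * (B0 * ((p:ℝ)^(-(m:ℤ)) * (p:ℝ)^(-(n:ℤ)))) := by
            apply mul_le_mul_of_nonneg_left _ (by positivity)
            exact hKE
        _ = B0 * (p:ℝ)^(-(n:ℤ)) := by
            have : ((p:ℝ)^(-(m:ℤ))) ≠ 0 := by positivity
            field_simp
    have hlim : Tendsto (fun m => qNum q (p^n) * ((qNum q (p ^ (m + n)))⁻¹ *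
        ∑ i ∈ range (p ^ m), ∑ j ∈ range d, c j * (qNum q (a + i * p ^ n)) ^ j))
        atTop (𝓝 (qNum q (p^n) * μP x n)) := hT.const_mul _
    have hnormlim := (hlim.sub (tendsto_const_nhds (x := Pa))).norm
    have hfin := le_of_tendsto hnormlim (Eventually.of_forall hbound)
    have hPag : Pa = g ((a : ℕ) : PadicInt p) := by
      rw [hPa, hg]
      exact Finset.sum_congr rfl fun j _ => by rw [hbqNat]
    rwa [hPag] at hfin
  rw [show (∑ j ∈ range d, c j * (bq x) ^ j) = g x from rfl]
  rw [tendsto_iff_norm_sub_tendsto_zero]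
  have hgx : Tendsto (fun n => ‖g ((x.appr n : ℕ) : PadicInt p) - g x‖) atTop (𝓝 0) := by
    have := (((hgc.tendsto x).comp htendsto_appr).sub (tendsto_const_nhds (x := g x))).norm
    simpa using this
  have hBlim : Tendsto
      (fun n : ℕ => B0 * (p:ℝ)^(-(n:ℤ)) + ‖g ((x.appr n : ℕ) : PadicInt p) - g x‖)
      atTop (𝓝 0) := by
    have := (hpinv.const_mul B0).add hgx
    simpa using this
  refine squeeze_zero' (Eventually.of_forall fun n => norm_nonneg _) ?_ hBlim
  filter_upwards [eventually_ge_atTop 1] with n hn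
  calc ‖qNum q (p^n) * μP x n - g x‖
      = ‖(qNum q (p^n) * μP x n - g ((x.appr n : ℕ) : PadicInt p))
          + (g ((x.appr n : ℕ) : PadicInt p) - g x)‖ := by rw [sub_add_sub_cancel]
    _ ≤ ‖qNum q (p^n) * μP x n - g ((x.appr n : ℕ) : PadicInt p)‖
          + ‖g ((x.appr n : ℕ) : PadicInt p) - g x‖ := norm_add_le _ _
    _ ≤ B0 * (p:ℝ)^(-(n:ℤ)) + ‖g ((x.appr n : ℕ) : PadicInt p) - g x‖ :=
          add_le_add_left (hmain n hn) _
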